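/- For every integer n ≥ 1, with x_j = 1 − sin²(π/(n+3))/sin²(π(j+1)/(n+3)) for 1 ≤ j ≤ n, one has (n+3)·∑_{j=1}^n L(x_j) = (π²/6)·n(n+1), where L is the Rogers dilogarithm. -/

import Mathlib

/-!
Write `m = n + 3` and `s k = sin (π k / m)`. Since `L(1) = ζ(2) = π²/6` (expand `-log t / (1 - t)`
as `∑ tⁿ (-log t)`), the reflection `L(z) + L(1 - z) = L(1)` reduces the theorem to
`m ∑_{k=2}^{m-2} L(s₁² / s_k²) = 2 (m - 3) L(1)`.

The numbers `s₁ s_{g+1} / (s_k s_{k+g})` are cross-ratios of quadrilaterals inscribed in the regular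
`m`-gon, and Ptolemy's relation `s_{x+y} s_{y+z} = s_x s_z + s_y s_{x+y+z}` turns the five-term
relation of `L` into a relation between the cross-ratios with parameters `g + 1` and `g`. Summed
over `k`, it telescopes to `W (g + 1) = W g + ∑_{k=2}^{m-g-2} L(s₁² / s_k²) - L(1)`, where `W g`
is the sum of `L` over the cross-ratios with parameter `g`. Since `W (m - 3) = L(1)` and
`W 0 = L(1) + ∑_{k=2}^{m-2} L(s₁² / s_k²)`, summing over `g` gives a weighted sum of the
`L(s₁² / s_k²)`, which the symmetry `k ↦ m - k` turns into the identity.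
-/

open scoped Real

noncomputable def rogersL (z : ℝ) : ℝ :=
  -(1 / 2) * ∫ t in (0:ℝ)..z, (Real.log (1 - t) / t + Real.log t / (1 - t))

open MeasureTheory Set Real

theorem hasDerivAt_primitive_pow_mul_neg_log (n : ℕ) {t : ℝ} (ht : 0 < t) :
    HasDerivAt (fun t : ℝ => t ^ (n + 1) / (n + 1) ^ 2 - t ^ (n + 1) * log t / (n + 1))
      (t ^ n * -log t) t := by
  have hpow : HasDerivAt (fun t : ℝ => t ^ (n + 1)) ((n + 1) * t ^ n) t := by
    simpa using hasDerivAt_pow (n + 1) t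
  refine ((hpow.div_const ((n + 1 : ℝ) ^ 2)).sub
    ((hpow.mul (hasDerivAt_log ht.ne')).div_const (n + 1 : ℝ))).congr_deriv ?_
  field_simp
  ring

theorem continuous_primitive_pow_mul_neg_log (n : ℕ) :
    Continuous (fun t : ℝ => t ^ (n + 1) / (n + 1) ^ 2 - t ^ (n + 1) * log t / (n + 1)) := by
  simp_rw [pow_succ, mul_assoc]
  fun_prop

theorem pow_mul_neg_log_nonneg (n : ℕ) {t : ℝ} (ht : t ∈ Ioc (0 : ℝ) 1) : 0 ≤ t ^ n * -log t :=
  mul_nonneg (pow_nonneg ht.1.le n) (neg_nonneg.2 (log_nonpos ht.1.le ht.2))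

theorem integrableOn_pow_mul_neg_log (n : ℕ) :
    IntegrableOn (fun t : ℝ => t ^ n * -log t) (Ioc 0 1) :=
  intervalIntegral.integrableOn_deriv_of_nonneg
    (continuous_primitive_pow_mul_neg_log n).continuousOn
    (fun _ ht => hasDerivAt_primitive_pow_mul_neg_log n ht.1)
    fun _ ht => pow_mul_neg_log_nonneg n (Ioo_subset_Ioc_self ht)

theorem integral_pow_mul_neg_log (n : ℕ) :
    ∫ t in Ioc (0 : ℝ) 1, t ^ n * -log t = 1 / (n + 1) ^ 2 := by
  rw [← intervalIntegral.integral_of_le zero_le_one,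
    intervalIntegral.integral_eq_sub_of_hasDeriv_right_of_le zero_le_one
      (continuous_primitive_pow_mul_neg_log n).continuousOn
      (fun _ ht => (hasDerivAt_primitive_pow_mul_neg_log n ht.1).hasDerivWithinAt)
      ((intervalIntegrable_iff_integrableOn_Ioc_of_le zero_le_one).2
        (integrableOn_pow_mul_neg_log n))]
  field_simp
  simp

theorem tsum_pow_mul_neg_log {t : ℝ} (ht : t ∈ Ioc (0 : ℝ) 1) :
    ∑' n : ℕ, t ^ n * -log t = -log t / (1 - t) := by
  rcases ht.2.eq_or_lt with rfl | ht1
  · simp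
  · rw [tsum_mul_right, tsum_geometric_of_lt_one ht.1.le ht1, div_eq_inv_mul]

theorem integral_neg_log_div_one_sub :
    ∫ t in Ioc (0 : ℝ) 1, -log t / (1 - t) = π ^ 2 / 6 := by
  have hzeta : HasSum (fun n : ℕ => ∫ t in Ioc (0 : ℝ) 1, t ^ n * -log t) (π ^ 2 / 6) := by
    simp only [integral_pow_mul_neg_log]
    simpa using (hasSum_nat_add_iff' 1).2 hasSum_zeta_two
  have hnorm (n : ℕ) :
      ∫ t in Ioc (0 : ℝ) 1, ‖t ^ n * -log t‖ = ∫ t in Ioc (0 : ℝ) 1, t ^ n * -log t :=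
    setIntegral_congr_fun measurableSet_Ioc fun t ht => norm_of_nonneg (pow_mul_neg_log_nonneg n ht)
  have hswap := hasSum_integral_of_summable_integral_norm integrableOn_pow_mul_neg_log
    (by simpa only [hnorm] using hzeta.summable)
  rw [hzeta.unique hswap]
  exact setIntegral_congr_fun measurableSet_Ioc fun t ht => (tsum_pow_mul_neg_log ht).symm

theorem norm_log_div_one_sub_le {t : ℝ} (ht : t ∈ Ioc (0 : ℝ) 1) :
    ‖log t / (1 - t)‖ ≤ 1 - log t := by
  have hlog : log t ≤ 0 := log_nonpos ht.1.le ht.2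
  rcases ht.2.eq_or_lt with rfl | ht1
  · simp
  have hinv := one_sub_inv_le_log_of_pos ht.1
  rw [norm_div, norm_of_nonpos hlog, norm_of_nonneg (by linarith), div_le_iff₀ (by linarith)]
  have : t - 1 ≤ t * log t := by
    have := mul_le_mul_of_nonneg_left hinv ht.1.le
    rwa [mul_sub, mul_one, mul_inv_cancel₀ ht.1.ne'] at this
  nlinarith

theorem intervalIntegrable_log_div_one_sub :
    IntervalIntegrable (fun t => log t / (1 - t)) volume 0 1 := by
  rw [intervalIntegrable_iff_integrableOn_Ioc_of_le zero_le_one]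
  refine Integrable.mono'
    ((integrableOn_const (C := (1 : ℝ)) (by simp)).sub intervalIntegral.intervalIntegrable_log'.1)
    (Measurable.aestronglyMeasurable (by fun_prop)) ?_
  exact (ae_restrict_iff' measurableSet_Ioc).2 (.of_forall fun t ht => norm_log_div_one_sub_le ht)

theorem intervalIntegrable_log_one_sub_div :
    IntervalIntegrable (fun t => log (1 - t) / t) volume 0 1 := by
  simpa using (intervalIntegrable_log_div_one_sub.comp_sub_left 1).symm

theorem integral_log_div_one_sub : ∫ t in (0 : ℝ)..1, log t / (1 - t) = -(π ^ 2 / 6) := by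
  rw [intervalIntegral.integral_of_le zero_le_one, ← integral_neg_log_div_one_sub, ← integral_neg]
  simp [neg_div]

theorem integral_log_one_sub_div : ∫ t in (0 : ℝ)..1, log (1 - t) / t = -(π ^ 2 / 6) := by
  have := intervalIntegral.integral_comp_sub_left (fun t => log t / (1 - t)) (1 : ℝ)
    (a := 0) (b := 1)
  simp only [sub_sub_cancel, sub_zero, sub_self] at this
  rw [this, integral_log_div_one_sub]

theorem rogersL_zero : rogersL 0 = 0 := by simp [rogersL]

theorem rogersL_one : rogersL 1 = π ^ 2 / 6 := by
  rw [rogersL, intervalIntegral.integral_add intervalIntegrable_log_one_sub_div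
    intervalIntegrable_log_div_one_sub, integral_log_one_sub_div, integral_log_div_one_sub]
  ring

theorem intervalIntegrable_rogersL_integrand {z : ℝ} (hz0 : 0 ≤ z) (hz1 : z ≤ 1) :
    IntervalIntegrable (fun t => log (1 - t) / t + log t / (1 - t)) volume 0 z :=
  (intervalIntegrable_log_one_sub_div.add intervalIntegrable_log_div_one_sub).mono_set <| by
    rw [uIcc_of_le hz0, uIcc_of_le zero_le_one]
    exact Icc_subset_Icc le_rfl hz1

theorem continuousOn_rogersL : ContinuousOn rogersL (Icc 0 1) := by
  have := intervalIntegral.continuousOn_primitive_interval'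
    (intervalIntegrable_rogersL_integrand zero_le_one le_rfl) left_mem_uIcc
  rw [uIcc_of_le zero_le_one] at this
  exact continuousOn_const.mul this

noncomputable def rogersLDeriv (z : ℝ) : ℝ := -(1 / 2) * (log (1 - z) / z + log z / (1 - z))

theorem hasDerivAt_rogersL {z : ℝ} (hz0 : 0 < z) (hz1 : z < 1) :
    HasDerivAt rogersL (rogersLDeriv z) z := by
  have hcont : ContinuousOn (fun t => log (1 - t) / t + log t / (1 - t)) (Ioo 0 1) := by
    have h0 : ∀ t ∈ Ioo (0 : ℝ) 1, t ≠ 0 := fun t ht => ht.1.ne'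
    have h1 : ∀ t ∈ Ioo (0 : ℝ) 1, 1 - t ≠ 0 := fun t ht => (sub_pos.2 ht.2).ne'
    exact (((continuousOn_const.sub continuousOn_id).log h1).div continuousOn_id h0).add
      ((continuousOn_id.log h0).div (continuousOn_const.sub continuousOn_id) h1)
  exact (intervalIntegral.integral_hasDerivAt_right
    (intervalIntegrable_rogersL_integrand hz0.le hz1.le)
    (hcont.stronglyMeasurableAtFilter isOpen_Ioo z ⟨hz0, hz1⟩)
    (hcont.continuousAt (Ioo_mem_nhds hz0 hz1))).const_mul _

theorem eq_of_hasDerivAt_zero {f : ℝ → ℝ} {a b : ℝ} (hab : a < b) (hf : ContinuousOn f (Icc a b))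
    (hf' : ∀ x ∈ Ioo a b, HasDerivAt f 0 x) : f b = f a := by
  obtain ⟨c, -, hc⟩ := exists_hasDerivAt_eq_slope f (fun _ => 0) hab hf hf'
  rw [eq_comm, div_eq_zero_iff, sub_eq_zero] at hc
  exact hc.resolve_right (sub_ne_zero.2 hab.ne')

theorem rogersL_add_rogersL_one_sub {z : ℝ} (hz0 : 0 ≤ z) (hz1 : z ≤ 1) :
    rogersL z + rogersL (1 - z) = π ^ 2 / 6 := by
  rcases hz0.eq_or_lt with rfl | hz0
  · simp [rogersL_zero, rogersL_one]
  have hcont : ContinuousOn (fun t => rogersL t + rogersL (1 - t)) (Icc 0 z) :=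
    (continuousOn_rogersL.mono (Icc_subset_Icc le_rfl hz1)).add <|
      continuousOn_rogersL.comp (by fun_prop) fun t ht => ⟨by linarith [ht.2], by linarith [ht.1]⟩
  have hderiv (t : ℝ) (ht : t ∈ Ioo 0 z) :
      HasDerivAt (fun t => rogersL t + rogersL (1 - t)) 0 t := by
    have h1 := hasDerivAt_rogersL ht.1 (by linarith [ht.2])
    have h2 := (hasDerivAt_rogersL (z := 1 - t) (by linarith [ht.2]) (by linarith [ht.1])).comp t
      ((hasDerivAt_id t).const_sub 1)
    refine (h1.add h2).congr_deriv ?_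
    rw [rogersLDeriv, rogersLDeriv, sub_sub_cancel]
    ring
  simpa [rogersL_zero, rogersL_one] using eq_of_hasDerivAt_zero hz0 hcont hderiv

theorem rogersLDeriv_pentagon {t y : ℝ} (ht0 : 0 < t) (ht1 : t < 1) (hy0 : 0 < y) (hy1 : y < 1) :
    rogersLDeriv (t * y) * y
      + rogersLDeriv (t * (1 - y) / (1 - t * y)) * ((1 - y) / (1 - t * y) ^ 2)
      + rogersLDeriv (y * (1 - t) / (1 - t * y)) * (y * (y - 1) / (1 - t * y) ^ 2)
      = rogersLDeriv t := by
  have h1t : 0 < 1 - t := by linarith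
  have h1y : 0 < 1 - y := by linarith
  have h1ty : 0 < 1 - t * y := by nlinarith
  have hu : 1 - t * (1 - y) / (1 - t * y) = (1 - t) / (1 - t * y) := by
    rw [eq_div_iff h1ty.ne', sub_mul, div_mul_cancel₀ _ h1ty.ne']; ring
  have hw : 1 - y * (1 - t) / (1 - t * y) = (1 - y) / (1 - t * y) := by
    rw [eq_div_iff h1ty.ne', sub_mul, div_mul_cancel₀ _ h1ty.ne']; ring
  simp only [rogersLDeriv]
  rw [hu, hw, log_mul ht0.ne' hy0.ne', log_div (x := t * (1 - y)) (by positivity) h1ty.ne',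
    log_mul ht0.ne' h1y.ne', log_div (x := y * (1 - t)) (by positivity) h1ty.ne',
    log_mul hy0.ne' h1t.ne', log_div h1t.ne' h1ty.ne', log_div h1y.ne' h1ty.ne']
  field_simp
  ring

theorem hasDerivAt_rogersL_pentagon {t y : ℝ} (ht0 : 0 < t) (ht1 : t < 1) (hy0 : 0 < y)
    (hy1 : y < 1) :
    HasDerivAt (fun t => rogersL (t * y) + rogersL (t * (1 - y) / (1 - t * y))
      + rogersL (y * (1 - t) / (1 - t * y)) - rogersL t) 0 t := by
  have h1ty : 0 < 1 - t * y := by nlinarith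
  have hden : HasDerivAt (fun t => 1 - t * y) (-y) t := by
    simpa using (hasDerivAt_mul_const y).const_sub 1
  have hu : HasDerivAt (fun t => t * (1 - y) / (1 - t * y)) ((1 - y) / (1 - t * y) ^ 2) t := by
    refine ((hasDerivAt_mul_const (1 - y)).div hden h1ty.ne').congr_deriv ?_
    field_simp
    ring
  have hw :
      HasDerivAt (fun t => y * (1 - t) / (1 - t * y)) (y * (y - 1) / (1 - t * y) ^ 2) t := by
    refine ((((hasDerivAt_id' t).const_sub 1).const_mul y).div hden h1ty.ne').congr_deriv ?_
    field_simp
    ring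
  have := (((hasDerivAt_rogersL (mul_pos ht0 hy0) (by nlinarith)).comp t
    (hasDerivAt_mul_const y)).add
    ((hasDerivAt_rogersL (by positivity) (by rw [div_lt_one h1ty]; nlinarith)).comp t hu)).add
    ((hasDerivAt_rogersL (by positivity) (by rw [div_lt_one h1ty]; nlinarith)).comp t hw)
    |>.sub (hasDerivAt_rogersL ht0 ht1)
  rwa [rogersLDeriv_pentagon ht0 ht1 hy0 hy1, sub_self] at this

theorem rogersL_pentagon {x y : ℝ} (hx0 : 0 < x) (hx1 : x ≤ 1) (hy0 : 0 < y) (hy1 : y < 1) :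
    rogersL x + rogersL y = rogersL (x * y) + rogersL (x * (1 - y) / (1 - x * y))
      + rogersL (y * (1 - x) / (1 - x * y)) := by
  have hden {t : ℝ} (ht : t ∈ Icc 0 x) : 0 < 1 - t * y := by nlinarith [ht.2]
  have hmaps {f : ℝ → ℝ} (hf : ContinuousOn f (Icc 0 x)) (h : ∀ t ∈ Icc 0 x, 0 ≤ f t ∧ f t ≤ 1) :
      ContinuousOn (fun t => rogersL (f t)) (Icc 0 x) :=
    continuousOn_rogersL.comp hf h
  have hcont : ContinuousOn (fun t => rogersL (t * y) + rogersL (t * (1 - y) / (1 - t * y))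
      + rogersL (y * (1 - t) / (1 - t * y)) - rogersL t) (Icc 0 x) := by
    refine (((hmaps (by fun_prop) fun t ht => ?_).add (hmaps ?_ fun t ht => ?_)).add
      (hmaps ?_ fun t ht => ?_)).sub (continuousOn_rogersL.mono (Icc_subset_Icc le_rfl hx1))
    · exact ⟨by nlinarith [ht.1], by nlinarith [ht.2]⟩
    · exact ContinuousOn.div (by fun_prop) (by fun_prop) fun t ht => (hden ht).ne'
    · exact ⟨by have := ht.1; have := hden ht; positivity,
        by rw [div_le_one (hden ht)]; nlinarith [ht.2]⟩
    · exact ContinuousOn.div (by fun_prop) (by fun_prop) fun t ht => (hden ht).ne'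
    · exact ⟨div_nonneg (by nlinarith [ht.2]) (hden ht).le,
        by rw [div_le_one (hden ht)]; nlinarith [ht.1]⟩
  have := eq_of_hasDerivAt_zero hx0 hcont fun t ht =>
    hasDerivAt_rogersL_pentagon ht.1 (ht.2.trans_le hx1) hy0 hy1
  simp only [zero_mul, sub_zero, div_one, mul_one, rogersL_zero] at this
  linarith

/-- Half the length of a chord joining two vertices `k` steps apart on the regular `m`-gon
inscribed in the unit circle. -/
noncomputable def chord (m k : ℕ) : ℝ := sin (π * k / m)

section Chord

variable {m : ℕ}

theorem chord_nonneg {k : ℕ} (hk : k ≤ m) : 0 ≤ chord m k := by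
  refine sin_nonneg_of_nonneg_of_le_pi (by positivity) ?_
  rcases (Nat.zero_le m).eq_or_lt with rfl | hm
  · simpa using pi_pos.le
  rw [mul_div_assoc]
  exact mul_le_of_le_one_right pi_pos.le
    ((div_le_one (by exact_mod_cast hm)).2 (by exact_mod_cast hk))

theorem chord_pos {k : ℕ} (hk0 : 0 < k) (hkm : k < m) : 0 < chord m k := by
  have hm : (0 : ℝ) < m := by exact_mod_cast hk0.trans hkm
  refine sin_pos_of_pos_of_lt_pi (by positivity) ?_
  rw [mul_div_assoc]
  exact mul_lt_of_lt_one_right pi_pos ((div_lt_one hm).2 (by exact_mod_cast hkm))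

theorem chord_self : chord m m = 0 := by
  rcases eq_or_ne (m : ℝ) 0 with hm | hm
  · simp [chord, hm]
  · simp [chord, mul_div_assoc, div_self hm]

theorem chord_symm {j k : ℕ} (h : j + k = m) : chord m j = chord m k := by
  subst h
  rcases eq_or_ne ((j + k : ℕ) : ℝ) 0 with hm | hm
  · simp [chord, hm]
  · rw [chord, chord, ← sin_pi_sub]
    congr 1
    field_simp
    push_cast
    ring

theorem chord_ptolemy {a b c x y z : ℕ} (ha : x + y = a) (hb : y + z = b) (hc : x + y + z = c) :
    chord m a * chord m b = chord m x * chord m z + chord m y * chord m c := by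
  subst ha hb hc
  simp only [chord, Nat.cast_add, mul_add, add_div, sin_add, cos_add]
  linear_combination (sin (π * x / m) * sin (π * z / m)) * sin_sq_add_cos_sq (π * y / m)

end Chord

/-- The cross-ratios of the inscribed quadrilaterals with vertices `0, 1, k, k + g + 1` and
`0, g, g + 1, g + k` of the regular `m`-gon. -/
noncomputable def crossRatio (m g k : ℕ) : ℝ :=
  chord m 1 * chord m (g + 1) / (chord m k * chord m (k + g))

noncomputable def dualCrossRatio (m g k : ℕ) : ℝ :=
  chord m 1 * chord m (k + g) / (chord m (g + 1) * chord m k)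

section CrossRatio

variable {m g k : ℕ}

theorem one_sub_crossRatio (hk : 1 ≤ k) (hkg : k + g < m) :
    1 - crossRatio m g k
      = chord m (k - 1) * chord m (k + g + 1) / (chord m k * chord m (k + g)) := by
  have := chord_ptolemy (m := m) (a := k) (b := k + g) (c := k + g + 1) (x := 1) (y := k - 1)
    (z := g + 1) (by omega) (by omega) (by omega)
  rw [crossRatio,
    one_sub_div (mul_pos (chord_pos (by omega) (by omega)) (chord_pos (by omega) hkg)).ne']
  congr 1
  linarith

theorem one_sub_dualCrossRatio (hk : 1 ≤ k) (hkg : k + g < m) :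
    1 - dualCrossRatio m g k = chord m g * chord m (k - 1) / (chord m (g + 1) * chord m k) := by
  have := chord_ptolemy (m := m) (a := g + 1) (b := k) (c := k + g) (x := g) (y := 1)
    (z := k - 1) rfl (by omega) (by omega)
  rw [dualCrossRatio,
    one_sub_div (mul_pos (chord_pos (by omega) (by omega)) (chord_pos (by omega) (by omega))).ne']
  congr 1
  linarith

theorem crossRatio_pos (hk : 1 ≤ k) (hkg : k + g < m) : 0 < crossRatio m g k :=
  div_pos (mul_pos (chord_pos one_pos (by omega)) (chord_pos (by omega) (by omega)))
    (mul_pos (chord_pos (by omega) (by omega)) (chord_pos (by omega) hkg))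

theorem crossRatio_le_one (hk : 1 ≤ k) (hkg : k + g < m) : crossRatio m g k ≤ 1 := by
  have := one_sub_crossRatio hk hkg
  have : 0 ≤ 1 - crossRatio m g k := by
    rw [this]
    exact div_nonneg (mul_nonneg (chord_nonneg (by omega)) (chord_nonneg (by omega)))
      (mul_nonneg (chord_nonneg (by omega)) (chord_nonneg (by omega)))
  linarith

theorem dualCrossRatio_pos (hk : 1 ≤ k) (hkg : k + g < m) : 0 < dualCrossRatio m g k :=
  div_pos (mul_pos (chord_pos one_pos (by omega)) (chord_pos (by omega) hkg))
    (mul_pos (chord_pos (by omega) (by omega)) (chord_pos (by omega) (by omega)))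

theorem dualCrossRatio_lt_one (hk : 2 ≤ k) (hg : 1 ≤ g) (hkg : k + g < m) :
    dualCrossRatio m g k < 1 := by
  have := one_sub_dualCrossRatio (by omega : 1 ≤ k) hkg
  have : 0 < 1 - dualCrossRatio m g k := by
    rw [this]
    exact div_pos (mul_pos (chord_pos hg (by omega)) (chord_pos (by omega) (by omega)))
      (mul_pos (chord_pos (by omega) (by omega)) (chord_pos (by omega) (by omega)))
  linarith

theorem crossRatio_mul_dualCrossRatio (hk : 1 ≤ k) (hkg : k + g < m) :
    crossRatio m g k * dualCrossRatio m g k = crossRatio m 0 k := by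
  have h1 := (chord_pos (m := m) (k := g + 1) (by omega) (by omega)).ne'
  have h2 := (chord_pos (m := m) (k := k + g) (by omega) hkg).ne'
  simp only [crossRatio, dualCrossRatio, add_zero, zero_add]
  field_simp

theorem crossRatio_eq_one (hk : 1 ≤ k) (h : k + g + 1 = m) : crossRatio m g k = 1 := by
  rw [crossRatio, chord_symm (j := k) (k := g + 1) (by omega), chord_symm (j := k + g) (k := 1) h,
    mul_comm (chord m 1)]
  exact div_self (mul_pos (chord_pos (by omega) (by omega)) (chord_pos one_pos (by omega))).ne'

theorem dualCrossRatio_eq_zero (h : k + g = m) : dualCrossRatio m g k = 0 := by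
  rw [dualCrossRatio, h, chord_self, mul_zero, zero_div]

theorem crossRatio_zero_symm {j : ℕ} (h : j + k = m) : crossRatio m 0 j = crossRatio m 0 k := by
  simp only [crossRatio, add_zero, chord_symm h]

theorem rogersL_crossRatio_pentagon (hk : 2 ≤ k) (hkg : k + g + 2 ≤ m) :
    rogersL (crossRatio m (g + 1) k) + rogersL (dualCrossRatio m (g + 1) k)
      = rogersL (crossRatio m 0 k) + rogersL (crossRatio m g (k + 1))
        + rogersL (dualCrossRatio m (g + 1) (k + 1)) := by
  have hxy := crossRatio_mul_dualCrossRatio (m := m) (g := g + 1) (k := k) (by omega) (by omega)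
  have h1xy := one_sub_crossRatio (m := m) (g := 0) (k := k) (by omega) (by omega)
  have h1x := one_sub_crossRatio (m := m) (g := g + 1) (k := k) (by omega) (by omega)
  have h1y := one_sub_dualCrossRatio (m := m) (g := g + 1) (k := k) (by omega) (by omega)
  rw [← hxy] at h1xy
  have hk1 := (chord_pos (m := m) (k := k - 1) (by omega) (by omega)).ne'
  have hk2 := (chord_pos (m := m) (k := k) (by omega) (by omega)).ne'
  have hk3 := (chord_pos (m := m) (k := k + 1) (by omega) (by omega)).ne'
  have hg1 := (chord_pos (m := m) (k := g + 1) (by omega) (by omega)).ne'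
  have hg2 := (chord_pos (m := m) (k := g + 1 + 1) (by omega) (by omega)).ne'
  have hkg := (chord_pos (m := m) (k := k + (g + 1)) (by omega) (by omega)).ne'
  set x := crossRatio m (g + 1) k with hx
  set y := dualCrossRatio m (g + 1) k with hy
  have hu : crossRatio m g (k + 1) = x * (1 - y) / (1 - x * y) := by
    rw [h1y, h1xy, hx]
    simp only [crossRatio, add_zero, show k + 1 + g = k + (g + 1) by ring]
    field_simp
  have hw : dualCrossRatio m (g + 1) (k + 1) = y * (1 - x) / (1 - x * y) := by
    rw [h1x, h1xy, hy]
    simp only [dualCrossRatio, add_zero, show k + 1 + (g + 1) = k + (g + 1) + 1 by ring]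
    field_simp
  rw [← hxy, hu, hw]
  exact rogersL_pentagon (crossRatio_pos (by omega) (by omega))
    (crossRatio_le_one (by omega) (by omega)) (dualCrossRatio_pos (by omega) (by omega))
    (dualCrossRatio_lt_one hk (by omega) (by omega))

theorem rogersL_crossRatio_add_rogersL_dualCrossRatio (hg : g + 3 < m) :
    rogersL (crossRatio m g 2) + rogersL (dualCrossRatio m (g + 1) 2) = π ^ 2 / 6 := by
  have h := one_sub_dualCrossRatio (m := m) (g := g + 1) (k := 2) (by norm_num) (by omega)
  have hA : 1 - dualCrossRatio m (g + 1) 2 = crossRatio m g 2 := by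
    rw [h, crossRatio, show g + 1 + 1 = 2 + g by ring]
    ring
  rw [← hA, add_comm]
  exact rogersL_add_rogersL_one_sub (dualCrossRatio_pos (by norm_num) (by omega)).le
    (dualCrossRatio_lt_one le_rfl (by omega) (by omega)).le

end CrossRatio

theorem sum_range_add_eq_of_add_eq_add_succ {G : Type*} [AddCommGroup G] {a b d t : ℕ → G}
    {N : ℕ} (h : ∀ i < N, a i + d i = t i + b (i + 1) + d (i + 1)) :
    ∑ i ∈ Finset.range N, a i + (b 0 + d 0)
      = ∑ i ∈ Finset.range N, t i + ∑ i ∈ Finset.range (N + 1), b i + d N := by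
  induction N with
  | zero => simp
  | succ N ih =>
    calc ∑ i ∈ Finset.range (N + 1), a i + (b 0 + d 0)
        = (∑ i ∈ Finset.range N, a i + (b 0 + d 0)) + a N := by
          rw [Finset.sum_range_succ]; abel
      _ = ∑ i ∈ Finset.range N, t i + ∑ i ∈ Finset.range (N + 1), b i + (a N + d N) := by
          rw [ih fun i hi => h i (by omega)]; abel
      _ = _ := by
          rw [h N (by omega), Finset.sum_range_succ t, Finset.sum_range_succ b (N + 1)]; abel

noncomputable def crossRatioSum (n h : ℕ) : ℝ :=
  ∑ i ∈ Finset.range (n + 1 - h), rogersL (crossRatio (n + 3) h (i + 2))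

theorem crossRatioSum_succ {n h : ℕ} (hh : h < n) :
    crossRatioSum n (h + 1) = ∑ i ∈ Finset.range (n - h), rogersL (crossRatio (n + 3) 0 (i + 2))
      + crossRatioSum n h - π ^ 2 / 6 := by
  have htel := sum_range_add_eq_of_add_eq_add_succ (N := n - h)
    (a := fun i => rogersL (crossRatio (n + 3) (h + 1) (i + 2)))
    (b := fun i => rogersL (crossRatio (n + 3) h (i + 2)))
    (d := fun i => rogersL (dualCrossRatio (n + 3) (h + 1) (i + 2)))
    (t := fun i => rogersL (crossRatio (n + 3) 0 (i + 2)))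
    fun i hi => rogersL_crossRatio_pentagon (by omega) (by omega)
  have hbd := rogersL_crossRatio_add_rogersL_dualCrossRatio (m := n + 3) (g := h) (by omega)
  have hdN : dualCrossRatio (n + 3) (h + 1) (n - h + 2) = 0 := dualCrossRatio_eq_zero (by omega)
  simp only [hdN, rogersL_zero] at htel
  rw [crossRatioSum, crossRatioSum, show n + 1 - (h + 1) = n - h by omega,
    show n + 1 - h = n - h + 1 by omega]
  linarith

theorem crossRatioSum_eq {n H : ℕ} (hH : H ≤ n) :
    crossRatioSum n H = crossRatioSum n 0 + ∑ h ∈ Finset.range H,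
      ∑ i ∈ Finset.range (n - h), rogersL (crossRatio (n + 3) 0 (i + 2)) - H * (π ^ 2 / 6) := by
  induction H with
  | zero => simp
  | succ H ih =>
    rw [crossRatioSum_succ hH, ih (by omega), Finset.sum_range_succ]
    push_cast
    ring

theorem crossRatioSum_zero (n : ℕ) :
    crossRatioSum n 0
      = ∑ i ∈ Finset.range n, rogersL (crossRatio (n + 3) 0 (i + 2)) + π ^ 2 / 6 := by
  rw [crossRatioSum, Nat.sub_zero, Finset.sum_range_succ,
    crossRatio_eq_one (by omega) (by omega), rogersL_one]

theorem crossRatioSum_self (n : ℕ) : crossRatioSum n n = π ^ 2 / 6 := by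
  rw [crossRatioSum, show n + 1 - n = 1 by omega, Finset.sum_range_one,
    crossRatio_eq_one (by omega) (by omega), rogersL_one]

theorem sum_range_sum_range_sub_of_symm {M : ℕ} {f : ℕ → ℝ} (hf : ∀ i < M, f (M - 1 - i) = f i) :
    ∑ h ∈ Finset.range M, ∑ i ∈ Finset.range (M - h), f i
      = (M + 1) / 2 * ∑ i ∈ Finset.range M, f i := by
  have hswap : ∑ h ∈ Finset.range M, ∑ i ∈ Finset.range (M - h), f i
      = ∑ i ∈ Finset.range M, ((M - i : ℕ) : ℝ) * f i := by
    rw [Finset.sum_comm' (t' := Finset.range M) (s' := fun i => Finset.range (M - i))]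
    · simp
    · intro h i
      simp only [Finset.mem_range]
      omega
  have hrefl : ∑ i ∈ Finset.range M, ((M - i : ℕ) : ℝ) * f i
      = ∑ i ∈ Finset.range M, ((i : ℝ) + 1) * f i := by
    rw [← Finset.sum_range_reflect]
    refine Finset.sum_congr rfl fun i hi => ?_
    have hi := Finset.mem_range.1 hi
    rw [hf i hi, show M - (M - 1 - i) = i + 1 by omega]
    push_cast
    ring
  have hsum : ∑ i ∈ Finset.range M, ((M - i : ℕ) : ℝ) * f i
      + ∑ i ∈ Finset.range M, ((i : ℝ) + 1) * f i = (M + 1) * ∑ i ∈ Finset.range M, f i := by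
    rw [← Finset.sum_add_distrib, Finset.mul_sum]
    refine Finset.sum_congr rfl fun i hi => ?_
    rw [Nat.cast_sub (Finset.mem_range.1 hi).le]
    ring
  linarith

theorem sum_rogersL_crossRatio_zero (n : ℕ) :
    ∑ i ∈ Finset.range n, rogersL (crossRatio (n + 3) 0 (i + 2))
      = π ^ 2 / 6 * (2 * n / (n + 3)) := by
  have hsymm (i : ℕ) (hi : i < n) :
      rogersL (crossRatio (n + 3) 0 (n - 1 - i + 2)) = rogersL (crossRatio (n + 3) 0 (i + 2)) := by
    rw [crossRatio_zero_symm (by omega : n - 1 - i + 2 + (i + 2) = n + 3)]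
  have h := crossRatioSum_eq (le_refl n)
  rw [crossRatioSum_self, crossRatioSum_zero, sum_range_sum_range_sub_of_symm hsymm] at h
  field_simp
  linarith

theorem crossRatio_zero_eq_sin_sq_div (n j : ℕ) :
    crossRatio (n + 3) 0 (j + 1) = sin (π / (n + 3)) ^ 2 / sin (π * (j + 1) / (n + 3)) ^ 2 := by
  simp only [crossRatio, chord, add_zero]
  push_cast
  ring_nf

theorem sum_rogersL_sin_sq_div_sin_sq (n : ℕ) :
    ∑ j ∈ Finset.Icc 1 n, rogersL (sin (π / (n + 3)) ^ 2 / sin (π * (j + 1) / (n + 3)) ^ 2)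
      = π ^ 2 / 6 * (2 * n / (n + 3)) := by
  calc _ = ∑ i ∈ Finset.range n, rogersL (crossRatio (n + 3) 0 (i + 1 + 1)) := by
        rw [Finset.range_eq_Ico,
          Finset.sum_Ico_add' (fun j => rogersL (crossRatio (n + 3) 0 (j + 1))), zero_add,
          Finset.Ico_add_one_right_eq_Icc]
        simp only [crossRatio_zero_eq_sin_sq_div]
    _ = _ := sum_rogersL_crossRatio_zero n

theorem rogers_sum_identity'_general (n : ℕ) :
    ((n : ℝ) + 3) * ∑ j ∈ Finset.Icc 1 n,
        rogersL (1 - Real.sin (π / (n + 3)) ^ 2 / Real.sin (π * (j + 1) / (n + 3)) ^ 2)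
      = π ^ 2 / 6 * (n * (n + 1)) := by
  have hrefl (j : ℕ) (hj : j ∈ Finset.Icc 1 n) :
      rogersL (1 - sin (π / (n + 3)) ^ 2 / sin (π * (j + 1) / (n + 3)) ^ 2)
        = π ^ 2 / 6 - rogersL (sin (π / (n + 3)) ^ 2 / sin (π * (j + 1) / (n + 3)) ^ 2) := by
    have hj := Finset.mem_Icc.1 hj
    rw [← crossRatio_zero_eq_sin_sq_div, eq_sub_iff_add_eq, add_comm]
    exact rogersL_add_rogersL_one_sub (crossRatio_pos (by omega) (by omega)).le
      (crossRatio_le_one (by omega) (by omega))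
  rw [Finset.sum_congr rfl hrefl, Finset.sum_sub_distrib, sum_rogersL_sin_sq_div_sin_sq,
    Finset.sum_const, Nat.card_Icc, Nat.add_sub_cancel, nsmul_eq_mul]
  field_simp
  ring

/-- With `x_j = 1 − sin²(π/(n+3))/sin²(π(j+1)/(n+3))`,
one has `(n+3)·∑_{j=1}^n L(x_j) = (π²/6)·n(n+1)`. -/
theorem rogers_sum_identity' (n : ℕ) (hn : 1 ≤ n) :
    ((n : ℝ) + 3) * ∑ j ∈ Finset.Icc 1 n,
        rogersL (1 - Real.sin (π / (n + 3)) ^ 2 / Real.sin (π * (j + 1) / (n + 3)) ^ 2)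
      = π ^ 2 / 6 * (n * (n + 1)) :=
  rogers_sum_identity'_general n
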